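/- arXiv:1201.3463 — 2 statements merged into one kernel-verified Lean document; each statement's English description precedes it below -/
import Mathlib

section
/- Let w = (w1, w2) ∈ ℕ₊², let L = (L1, L2) be an affine automorphism of ℂ² and let T(x,y) = (x, y + f(x)) with deg f > 1. Writing (k1, k2) for the weighted bidegree of T ∘ L: if (deg_w L1, deg_w L2) = (w1, w2) then (k1, k2) = (w1, max{w1·deg f, w2}); if (deg_w L1, deg_w L2) = (w2, w1) then (k1, k2) = (w2, max{w2·deg f, w1}); and if (deg_w L1, deg_w L2) = (w̃, w̃) with w̃ = max{w1, w2} then (k1, k2) = (w̃, w̃·deg f). -/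
open MvPolynomial

/-- A polynomial map of ℂ², given by its two component polynomials. -/
abbrev PolyMap : Type := MvPolynomial (Fin 2) ℂ × MvPolynomial (Fin 2) ℂ

/-- Composition of polynomial maps: (F ∘ G). -/
noncomputable def pcomp (F G : PolyMap) : PolyMap :=
  (MvPolynomial.aeval ![G.1, G.2] F.1, MvPolynomial.aeval ![G.1, G.2] F.2)

/-- `F` is a polynomial automorphism of ℂ²: it has a polynomial inverse. -/
def IsPolyAut (F : PolyMap) : Prop :=
  ∃ G : PolyMap, pcomp F G = (MvPolynomial.X 0, MvPolynomial.X 1) ∧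
    pcomp G F = (MvPolynomial.X 0, MvPolynomial.X 1)

/-- Weighted degree with `wdeg x = w1`, `wdeg y = w2` (0 on the zero polynomial). -/
noncomputable def wdeg (w1 w2 : ℕ) (p : MvPolynomial (Fin 2) ℂ) : ℕ :=
  p.support.sup fun α => α 0 * w1 + α 1 * w2

/-- An affine automorphism: an automorphism both of whose components have total degree 1. -/
def IsAffineAut (F : PolyMap) : Prop :=
  IsPolyAut F ∧ F.1.totalDegree = 1 ∧ F.2.totalDegree = 1

/-- The triangular map (x, y) ↦ (x, y + f(x)). -/
noncomputable def lowerT (f : Polynomial ℂ) : PolyMap :=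
  (MvPolynomial.X 0,
   MvPolynomial.X 1 + Polynomial.aeval (MvPolynomial.X 0 : MvPolynomial (Fin 2) ℂ) f)

/-- The triangular map (x, y) ↦ (x + f(y), y). -/
noncomputable def upperT (f : Polynomial ℂ) : PolyMap :=
  (MvPolynomial.X 0 + Polynomial.aeval (MvPolynomial.X 1 : MvPolynomial (Fin 2) ℂ) f,
   MvPolynomial.X 1)

/-- `chain L1 f l = T_l ∘ ⋯ ∘ T_1 ∘ L1`, where `T_i = lowerT (f i)` for odd `i`
and `T_i = upperT (f i)` for even `i`. -/
noncomputable def chain (L1 : PolyMap) (f : ℕ → Polynomial ℂ) : ℕ → PolyMap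
  | 0 => L1
  | i + 1 => pcomp (if i % 2 = 0 then lowerT (f (i + 1)) else upperT (f (i + 1))) (chain L1 f i)

/-!
Substituting `t ^ w i • X i` for each variable turns a polynomial `p` into a polynomial in `t`
whose `t`-degree is the weighted degree of `p` and whose coefficients are the weighted
homogeneous components of `p`. Weighted degrees of sums, products and compositions then follow
from the usual degree theory of one-variable polynomials over a domain: `f(L₁)` has weighted
degree `deg f · deg_w L₁`, so only a tie `deg_w L₂ = deg f · deg_w L₁` needs an argument. There
the top components cannot cancel, because for affine `L₁, L₂` the component of `L₂` is
homogeneous of degree `1` and the leading term of `f(L₁)` is homogeneous of degree `deg f > 1`.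
-/

open scoped Polynomial

namespace MvPolynomial

variable {σ R : Type*}

section CommSemiring

variable [CommSemiring R] (w : σ → ℕ)

noncomputable def weightedSubst : MvPolynomial σ R →ₐ[R] (MvPolynomial σ R)[X] :=
  aeval fun i => Polynomial.C (X i) * Polynomial.X ^ w i

theorem weightedSubst_monomial (α : σ →₀ ℕ) (c : R) :
    weightedSubst w (monomial α c) =
      Polynomial.C (monomial α c) * Polynomial.X ^ Finsupp.weight w α := by
  rw [weightedSubst, aeval_monomial, Finsupp.weight_apply, monomial_eq, Finsupp.prod,
    Finsupp.prod, Finsupp.sum]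
  simp only [mul_pow, Finset.prod_mul_distrib, ← pow_mul, Finset.prod_pow_eq_pow_sum, ← map_pow,
    ← map_prod, map_mul, smul_eq_mul, mul_comm (w _), mul_assoc, Polynomial.algebraMap_apply,
    algebraMap_eq]

theorem coeff_weightedSubst (p : MvPolynomial σ R) (k : ℕ) :
    (weightedSubst w p).coeff k = weightedHomogeneousComponent w k p := by
  classical
  induction p using MvPolynomial.induction_on' with
  | monomial α c =>
    rw [weightedSubst_monomial, Polynomial.coeff_C_mul_X_pow,
      weightedHomogeneousComponent_of_mem (isWeightedHomogeneous_monomial w α c rfl)]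
  | add p q hp hq => rw [map_add, Polynomial.coeff_add, hp, hq, map_add]

theorem weightedHomogeneousComponent_weightedTotalDegree_ne_zero {p : MvPolynomial σ R}
    (hp : p ≠ 0) : weightedHomogeneousComponent w (weightedTotalDegree w p) p ≠ 0 := by
  classical
  obtain ⟨α, hα, hsup⟩ :=
    Finset.exists_mem_eq_sup p.support (support_nonempty.2 hp) (Finsupp.weight w)
  rw [ne_zero_iff]
  exact ⟨α, by rwa [coeff_weightedHomogeneousComponent, weightedTotalDegree, hsup, if_pos rfl,
    ← mem_support_iff]⟩

theorem natDegree_weightedSubst (p : MvPolynomial σ R) :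
    (weightedSubst w p).natDegree = weightedTotalDegree w p := by
  rcases eq_or_ne p 0 with rfl | hp
  · simp [weightedTotalDegree_zero]
  refine Polynomial.natDegree_eq_of_le_of_coeff_ne_zero ?_ ?_
  · rw [Polynomial.natDegree_le_iff_coeff_eq_zero]
    intro k hk
    rw [coeff_weightedSubst]
    exact weightedHomogeneousComponent_eq_zero _ p (by exact_mod_cast hk)
  · rw [coeff_weightedSubst]
    exact weightedHomogeneousComponent_weightedTotalDegree_ne_zero w hp

theorem leadingCoeff_weightedSubst (p : MvPolynomial σ R) :
    (weightedSubst w p).leadingCoeff =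
      weightedHomogeneousComponent w (weightedTotalDegree w p) p := by
  rw [Polynomial.leadingCoeff, natDegree_weightedSubst, coeff_weightedSubst]

theorem isHomogeneous_weightedHomogeneousComponent_of_totalDegree_le_one
    {p : MvPolynomial σ R} (hp : p.totalDegree ≤ 1) {k : ℕ} (hk : k ≠ 0) :
    (weightedHomogeneousComponent w k p).IsHomogeneous 1 := by
  classical
  intro α hα
  rw [coeff_weightedHomogeneousComponent, ite_ne_right_iff] at hα
  obtain ⟨hwα, hα⟩ := hα
  have hle : α.degree ≤ 1 := (le_totalDegree (mem_support_iff.2 hα)).trans hp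
  have hne : α.degree ≠ 0 := by
    rw [Ne, Finsupp.degree_eq_zero_iff]
    rintro rfl
    exact hk (by simpa using hwα.symm)
  have : Finsupp.weight 1 α = α.degree := by rw [Finsupp.degree_eq_weight_one]; rfl
  omega

theorem weightedSubst_aeval (q : MvPolynomial σ R) (f : R[X]) :
    weightedSubst w (Polynomial.aeval q f) =
      (f.map (algebraMap R (MvPolynomial σ R))).comp (weightedSubst w q) := by
  rw [Polynomial.comp_eq_aeval, Polynomial.aeval_map_algebraMap, Polynomial.aeval_algHom_apply]

end CommSemiring

section CommRing

variable [CommRing R]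

theorem IsHomogeneous.add_ne_zero {p q : MvPolynomial σ R} {m n : ℕ} (hp : p.IsHomogeneous m)
    (hq : q.IsHomogeneous n) (hmn : m ≠ n) (hq0 : q ≠ 0) : p + q ≠ 0 := by
  intro h
  rw [add_eq_zero_iff_eq_neg] at h
  exact hmn ((h ▸ hp).inj_right hq.neg (neg_ne_zero.2 hq0))

variable [IsDomain R] (w : σ → ℕ)

theorem weightedTotalDegree_add_aeval_of_totalDegree_le_one {p q : MvPolynomial σ R}
    (hp : p.totalDegree ≤ 1) (hq : q.totalDegree ≤ 1) (hq0 : 0 < weightedTotalDegree w q)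
    {f : R[X]} (hf : 1 < f.natDegree) :
    weightedTotalDegree w (p + Polynomial.aeval q f) =
      max (weightedTotalDegree w q * f.natDegree) (weightedTotalDegree w p) := by
  set F := f.map (algebraMap R (MvPolynomial σ R))
  have hinj : Function.Injective (algebraMap R (MvPolynomial σ R)) := C_injective σ R
  have hF : F.natDegree = f.natDegree := Polynomial.natDegree_map_eq_of_injective hinj f
  have hdeg : (F.comp (weightedSubst w q)).natDegree = weightedTotalDegree w q * f.natDegree := by
    rw [Polynomial.natDegree_comp, hF, natDegree_weightedSubst, mul_comm]
  rw [← natDegree_weightedSubst, map_add, weightedSubst_aeval]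
  rcases lt_or_ge (weightedTotalDegree w q * f.natDegree) (weightedTotalDegree w p) with hlt | hle
  · rw [max_eq_right hlt.le, Polynomial.natDegree_add_eq_left_of_natDegree_lt
      (by rwa [hdeg, natDegree_weightedSubst]), natDegree_weightedSubst]
  rw [max_eq_left hle]
  have hq_ne : q ≠ 0 := by rintro rfl; simp [weightedTotalDegree_zero] at hq0
  -- The two top coefficients are homogeneous of the distinct degrees 1 and `natDegree f`.
  have htop : weightedHomogeneousComponent w (weightedTotalDegree w q * f.natDegree) p +
      C f.leadingCoeff *
        weightedHomogeneousComponent w (weightedTotalDegree w q) q ^ f.natDegree ≠ 0 :=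
    (isHomogeneous_weightedHomogeneousComponent_of_totalDegree_le_one w hp
      (by positivity)).add_ne_zero
      (((isHomogeneous_weightedHomogeneousComponent_of_totalDegree_le_one w hq hq0.ne').pow
        f.natDegree).C_mul _) (by omega)
      (mul_ne_zero (by simpa using Polynomial.ne_zero_of_natDegree_gt hf)
        (pow_ne_zero _ (weightedHomogeneousComponent_weightedTotalDegree_ne_zero w hq_ne)))
  refine Polynomial.natDegree_eq_of_le_of_coeff_ne_zero
    (Polynomial.natDegree_add_le_of_degree_le (by rwa [natDegree_weightedSubst]) hdeg.le) ?_
  rwa [Polynomial.coeff_add, ← hdeg, Polynomial.coeff_natDegree,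
    Polynomial.leadingCoeff_comp (by rw [natDegree_weightedSubst]; omega),
    Polynomial.leadingCoeff_map_of_injective hinj, hF, hdeg, coeff_weightedSubst,
    leadingCoeff_weightedSubst, algebraMap_eq]

end CommRing

end MvPolynomial

theorem wdeg_eq_weightedTotalDegree (w1 w2 : ℕ) (p : MvPolynomial (Fin 2) ℂ) :
    wdeg w1 w2 p = weightedTotalDegree ![w1, w2] p := by
  refine Finset.sup_congr rfl fun α _ => ?_
  simp [Finsupp.weight_apply, Finsupp.sum_fintype, mul_comm]

theorem pcomp_lowerT (f : Polynomial ℂ) (L : PolyMap) :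
    pcomp (lowerT f) L = (L.1, L.2 + Polynomial.aeval L.1 f) := by
  simp [pcomp, lowerT, ← Polynomial.aeval_algHom_apply]

/-- Weighted bidegree of `T ∘ L` for `L` affine and `T(x,y) = (x, y + f(x))`, `deg f > 1`,
in terms of the weighted bidegree of `L`. -/
theorem stmt_4 (w1 w2 : ℕ) (hw1 : 0 < w1) (hw2 : 0 < w2) (L : PolyMap) (hL : IsAffineAut L)
    (f : Polynomial ℂ) (hf : 1 < f.natDegree)
    (k1 k2 : ℕ) (hk1 : k1 = wdeg w1 w2 (pcomp (lowerT f) L).1)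
    (hk2 : k2 = wdeg w1 w2 (pcomp (lowerT f) L).2) :
    ((wdeg w1 w2 L.1, wdeg w1 w2 L.2) = (w1, w2) →
      (k1, k2) = (w1, max (w1 * f.natDegree) w2)) ∧
    ((wdeg w1 w2 L.1, wdeg w1 w2 L.2) = (w2, w1) →
      (k1, k2) = (w2, max (w2 * f.natDegree) w1)) ∧
    ((wdeg w1 w2 L.1, wdeg w1 w2 L.2) = (max w1 w2, max w1 w2) →
      (k1, k2) = (max w1 w2, max w1 w2 * f.natDegree)) := by
  obtain ⟨-, hL1, hL2⟩ := hL
  have hk1 : k1 = wdeg w1 w2 L.1 := by rw [hk1, pcomp_lowerT]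
  have hk2 (h : 0 < wdeg w1 w2 L.1) :
      k2 = max (wdeg w1 w2 L.1 * f.natDegree) (wdeg w1 w2 L.2) := by
    simp only [hk2, pcomp_lowerT, wdeg_eq_weightedTotalDegree] at h ⊢
    exact weightedTotalDegree_add_aeval_of_totalDegree_le_one _ hL2.le hL1.le h hf
  refine ⟨?_, ?_, ?_⟩ <;> intro h <;> obtain ⟨h1, h2⟩ := Prod.mk.inj h <;> rw [h1] at hk1 hk2
  · rw [hk1, hk2 hw1, h2]
  · rw [hk1, hk2 hw2, h2]
  · rw [hk1, hk2 (lt_max_of_lt_left hw1), h2, max_eq_left (Nat.le_mul_of_pos_right _ (by omega))]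
end

section
/- Let w = (w1, w2) ∈ ℕ₊². If F is a polynomial automorphism of ℂ² of length at least 2, then deg_w F1 + deg_w F2 > w1 + w2. -/
open MvPolynomial

/-!
Substituting `x ↦ x t^w1`, `y ↦ y t^w2` turns the weighted degree into a `t`-degree, so
`deg_w g(P) = deg g · deg_w P`. Up to order, the components of `T_n ∘ ⋯ ∘ T_1 ∘ L1` are
consecutive terms `a_{n-1}, a_n` of the recursion `a_{k+1} = a_{k-1} + f_{k+1}(a_k)` started from
`(a_{-1}, a_0) = (L1_2, L1_1)`, and each new term has at least twice the weighted degree of its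
predecessor. At the first step this uses that the top weighted component of `f_1(L1_1)` is the
`(deg f_1)`-th power of a linear form, so it cannot cancel against the affine `L1_2`; and since
both variables occur in `L1`, `deg_w a_1 ≥ max w1 w2`. Hence after `l ≥ 2` steps the older term
has weighted degree `≥ max w1 w2` and the newer one at least twice that, and composing with the
affine automorphism `L2` does not lower the sum of the two weighted degrees.
-/

section WeightedScaling

variable {R σ : Type*} [CommSemiring R] (w : σ → ℕ)

noncomputable def weightedScaling : MvPolynomial σ R →ₐ[R] Polynomial (MvPolynomial σ R) :=
  aeval fun i => Polynomial.C (X i) * Polynomial.X ^ w i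

lemma weightedScaling_monomial (α : σ →₀ ℕ) (c : R) :
    weightedScaling w (monomial α c) =
      Polynomial.monomial (Finsupp.weight w α) (monomial α c) := by
  rw [weightedScaling, aeval_monomial, ← Polynomial.C_mul_X_pow_eq_monomial, monomial_eq,
    Finsupp.prod, Finsupp.prod]
  simp only [mul_pow, Finset.prod_mul_distrib, ← map_pow, ← map_prod, ← pow_mul,
    Finset.prod_pow_eq_pow_sum, Polynomial.algebraMap_apply, algebraMap_eq, map_mul,
    Finsupp.weight_apply, Finsupp.sum, smul_eq_mul, mul_comm (w _)]
  ring

lemma coeff_coeff_weightedScaling (p : MvPolynomial σ R) (k : ℕ) (α : σ →₀ ℕ) :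
    ((weightedScaling w p).coeff k).coeff α =
      if Finsupp.weight w α = k then p.coeff α else 0 := by
  classical
  induction p using MvPolynomial.induction_on' with
  | monomial β c =>
    rw [weightedScaling_monomial, Polynomial.coeff_monomial, coeff_monomial]
    by_cases hβ : β = α
    · subst hβ; split_ifs <;> simp_all
    · split_ifs <;> simp_all
  | add p q hp hq =>
    simp only [map_add, Polynomial.coeff_add, coeff_add, hp, hq]
    split_ifs <;> simp

lemma weight_eq_of_mem_support_coeff_weightedScaling {p : MvPolynomial σ R} {k : ℕ}
    {α : σ →₀ ℕ} (hα : α ∈ ((weightedScaling w p).coeff k).support) :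
    Finsupp.weight w α = k ∧ α ∈ p.support := by
  rw [mem_support_iff, coeff_coeff_weightedScaling] at hα
  split_ifs at hα with h
  · exact ⟨h, mem_support_iff.mpr hα⟩
  · exact absurd rfl hα

lemma natDegree_weightedScaling (p : MvPolynomial σ R) :
    (weightedScaling w p).natDegree = p.support.sup (Finsupp.weight w) := by
  apply le_antisymm
  · rw [Polynomial.natDegree_le_iff_coeff_eq_zero]
    intro k hk
    ext α
    rw [coeff_coeff_weightedScaling, coeff_zero, ite_eq_right_iff]
    rintro rfl
    by_contra hα
    exact (Finset.le_sup (mem_support_iff.mpr hα)).not_gt hk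
  · refine Finset.sup_le fun α hα => Polynomial.le_natDegree_of_ne_zero fun h => ?_
    have := coeff_coeff_weightedScaling w p (Finsupp.weight w α) α
    rw [h, coeff_zero, if_pos rfl] at this
    exact mem_support_iff.mp hα this.symm

lemma totalDegree_coeff_weightedScaling_le (p : MvPolynomial σ R) (k : ℕ) :
    ((weightedScaling w p).coeff k).totalDegree ≤ p.totalDegree :=
  Finset.sup_mono fun _ hα => (weight_eq_of_mem_support_coeff_weightedScaling w hα).2

lemma isHomogeneous_coeff_weightedScaling {p : MvPolynomial σ R} (hp : p.totalDegree ≤ 1)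
    {k : ℕ} (hk : k ≠ 0) : ((weightedScaling w p).coeff k).IsHomogeneous 1 := by
  intro α hα
  obtain ⟨hαk, hαp⟩ :=
    weight_eq_of_mem_support_coeff_weightedScaling w (mem_support_iff.mpr hα)
  have hα0 : α.degree ≠ 0 := by
    rw [Ne, Finsupp.degree_eq_zero_iff]
    rintro rfl
    exact hk (by simp [← hαk])
  have hα1 : α.degree ≤ 1 := (le_totalDegree hαp).trans hp
  rw [Pi.one_def, ← Finsupp.degree_eq_weight_one]
  omega

lemma weightedScaling_aeval (g : Polynomial R) (P : MvPolynomial σ R) :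
    weightedScaling w (Polynomial.aeval P g) =
      (g.map (algebraMap R _)).comp (weightedScaling w P) := by
  rw [Polynomial.comp_eq_aeval, Polynomial.aeval_map_algebraMap, Polynomial.aeval_algHom_apply]

lemma natDegree_weightedScaling_aeval [NoZeroDivisors R] (g : Polynomial R)
    (P : MvPolynomial σ R) :
    (weightedScaling w (Polynomial.aeval P g)).natDegree =
      g.natDegree * (weightedScaling w P).natDegree := by
  rw [weightedScaling_aeval, Polynomial.natDegree_comp, algebraMap_eq,
    Polynomial.natDegree_map_eq_of_injective (C_injective σ R)]

end WeightedScaling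

section WeightedDegree

variable {w1 w2 : ℕ}

lemma wdeg_eq_natDegree (w1 w2 : ℕ) (p : MvPolynomial (Fin 2) ℂ) :
    wdeg w1 w2 p = (weightedScaling ![w1, w2] p).natDegree := by
  rw [natDegree_weightedScaling, wdeg]
  congr 1
  funext α
  simp [Finsupp.weight_apply, Finsupp.sum_fintype, mul_comm]

lemma wdeg_add_le (p q : MvPolynomial (Fin 2) ℂ) :
    wdeg w1 w2 (p + q) ≤ max (wdeg w1 w2 p) (wdeg w1 w2 q) := by
  simpa only [wdeg_eq_natDegree, map_add] using Polynomial.natDegree_add_le _ _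

lemma wdeg_add_eq_right_of_lt {p q : MvPolynomial (Fin 2) ℂ} (h : wdeg w1 w2 p < wdeg w1 w2 q) :
    wdeg w1 w2 (p + q) = wdeg w1 w2 q := by
  simp only [wdeg_eq_natDegree, map_add] at h ⊢
  exact Polynomial.natDegree_add_eq_right_of_natDegree_lt h

lemma wdeg_add_eq_left_of_lt {p q : MvPolynomial (Fin 2) ℂ} (h : wdeg w1 w2 q < wdeg w1 w2 p) :
    wdeg w1 w2 (p + q) = wdeg w1 w2 p := by
  rw [add_comm, wdeg_add_eq_right_of_lt h]

lemma wdeg_C (c : ℂ) : wdeg w1 w2 (C c) = 0 := by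
  simp [wdeg]

lemma wdeg_C_mul {a : ℂ} (ha : a ≠ 0) (p : MvPolynomial (Fin 2) ℂ) :
    wdeg w1 w2 (C a * p) = wdeg w1 w2 p := by
  simp only [wdeg, C_mul', support_smul_eq ha]

lemma wdeg_aeval (g : Polynomial ℂ) (P : MvPolynomial (Fin 2) ℂ) :
    wdeg w1 w2 (Polynomial.aeval P g) = g.natDegree * wdeg w1 w2 P := by
  rw [wdeg_eq_natDegree, wdeg_eq_natDegree, natDegree_weightedScaling_aeval]

lemma le_wdeg_of_mem_vars {p : MvPolynomial (Fin 2) ℂ} {i : Fin 2} (hi : i ∈ p.vars) :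
    ![w1, w2] i ≤ wdeg w1 w2 p := by
  obtain ⟨α, hα, hαi⟩ := (mem_vars_iff_mem_support i).mp hi
  have hle : α 0 * w1 + α 1 * w2 ≤ wdeg w1 w2 p :=
    Finset.le_sup (f := fun α : Fin 2 →₀ ℕ => α 0 * w1 + α 1 * w2) hα
  rw [Finsupp.mem_support_iff] at hαi
  fin_cases i <;> simp only [Fin.zero_eta, Fin.mk_one, Matrix.cons_val_zero,
    Matrix.cons_val_one] at hαi ⊢ <;> nlinarith [Nat.one_le_iff_ne_zero.mpr hαi]

lemma totalDegree_le_wdeg (hw1 : 0 < w1) (hw2 : 0 < w2) (p : MvPolynomial (Fin 2) ℂ) :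
    p.totalDegree ≤ wdeg w1 w2 p := by
  refine Finset.sup_mono_fun fun α _ => ?_
  rw [Finsupp.sum_fintype _ _ fun _ => rfl, Fin.sum_univ_two]
  exact Nat.add_le_add (Nat.le_mul_of_pos_right _ hw1) (Nat.le_mul_of_pos_right _ hw2)

lemma max_le_wdeg_add_aeval {P Q : MvPolynomial (Fin 2) ℂ} (hP : P.totalDegree ≤ 1)
    (hQ : Q.totalDegree ≤ 1) {g : Polynomial ℂ} (hg : 1 < g.natDegree) :
    max (wdeg w1 w2 Q) (g.natDegree * wdeg w1 w2 P) ≤ wdeg w1 w2 (Q + Polynomial.aeval P g) := by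
  rw [← wdeg_aeval]
  rcases lt_trichotomy (wdeg w1 w2 Q) (wdeg w1 w2 (Polynomial.aeval P g)) with h | h | h
  · rw [wdeg_add_eq_right_of_lt h]; omega
  swap
  · rw [wdeg_add_eq_left_of_lt h]; omega
  rw [← h, max_self]
  rcases eq_or_ne (wdeg w1 w2 Q) 0 with hk | hk
  · rw [hk]; exact Nat.zero_le _
  rw [wdeg_aeval] at h
  simp only [wdeg_eq_natDegree] at h hk ⊢
  set Φ := weightedScaling (R := ℂ) ![w1, w2]
  have hPk : (Φ P).natDegree ≠ 0 := by
    rintro h0; rw [h0, mul_zero] at h; exact hk h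
  -- the top coefficient of `Φ (g(P))` is homogeneous of degree `deg g ≥ 2`, that of `Φ Q` has
  -- total degree at most 1, so they cannot cancel
  set top := C g.leadingCoeff * (Φ P).leadingCoeff ^ g.natDegree
  have htop : (Φ (Polynomial.aeval P g)).coeff (Φ Q).natDegree = top := by
    rw [h, ← natDegree_weightedScaling_aeval, ← Polynomial.leadingCoeff, weightedScaling_aeval,
      Polynomial.leadingCoeff_comp hPk, algebraMap_eq,
      Polynomial.leadingCoeff_map_of_injective (C_injective _ ℂ),
      Polynomial.natDegree_map_eq_of_injective (C_injective _ ℂ)]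
  have htop_hom : top.IsHomogeneous g.natDegree := by
    have hlead : (Φ P).leadingCoeff.IsHomogeneous 1 :=
      isHomogeneous_coeff_weightedScaling _ hP hPk
    simpa only [one_mul] using (hlead.pow g.natDegree).C_mul g.leadingCoeff
  have htop_ne : top ≠ 0 := by
    refine mul_ne_zero (C_ne_zero.mpr ?_) (pow_ne_zero _ ?_)
    · exact Polynomial.leadingCoeff_ne_zero.mpr (by rintro rfl; simp at hg)
    · exact Polynomial.leadingCoeff_ne_zero.mpr (by rintro h0; simp [h0] at hPk)
  refine Polynomial.le_natDegree_of_ne_zero fun hsum => ?_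
  rw [map_add, Polynomial.coeff_add, htop] at hsum
  have hdeg := htop_hom.totalDegree htop_ne
  rw [eq_neg_of_add_eq_zero_right hsum, totalDegree_neg] at hdeg
  have hQtop : ((Φ Q).coeff (Φ Q).natDegree).totalDegree ≤ 1 :=
    (totalDegree_coeff_weightedScaling_le _ Q _).trans hQ
  omega

end WeightedDegree

section Affine

variable {w1 w2 : ℕ}

lemma eq_zero_or_eq_single_of_degree_le_one {α : Fin 2 →₀ ℕ} (h : α.degree ≤ 1) :
    α = 0 ∨ α = Finsupp.single 0 1 ∨ α = Finsupp.single 1 1 := by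
  rw [Finsupp.degree_eq_sum, Fin.sum_univ_two] at h
  simp only [Finsupp.ext_iff, Fin.forall_fin_two, Finsupp.coe_zero, Pi.zero_apply,
    Finsupp.single_eq_same, ne_eq, one_ne_zero, not_false_eq_true, Finsupp.single_eq_of_ne,
    zero_ne_one]
  omega

lemma eq_of_totalDegree_le_one {p : MvPolynomial (Fin 2) ℂ} (h : p.totalDegree ≤ 1) :
    p = C (coeff (Finsupp.single 0 1) p) * X 0 + C (coeff (Finsupp.single 1 1) p) * X 1 +
      C (coeff 0 p) := by
  ext α
  simp only [coeff_add, coeff_C_mul, coeff_X, coeff_C]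
  by_cases hα : α ∈ p.support
  · obtain rfl | rfl | rfl := eq_zero_or_eq_single_of_degree_le_one ((le_totalDegree hα).trans h)
      <;> simp [Finsupp.single_eq_single_iff, eq_comm (a := (0 : Fin 2 →₀ ℕ))]
  · rw [notMem_support_iff.mp hα]
    split_ifs <;> simp_all

lemma coeff_single_ne_zero_of_totalDegree_eq_one {p : MvPolynomial (Fin 2) ℂ}
    (h : p.totalDegree = 1) :
    coeff (Finsupp.single 0 1) p ≠ 0 ∨ coeff (Finsupp.single 1 1) p ≠ 0 := by
  by_contra! hc
  have hp := eq_of_totalDegree_le_one h.le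
  rw [hc.1, hc.2, C_0, zero_mul, zero_mul, zero_add, zero_add] at hp
  rw [hp, totalDegree_C] at h
  exact zero_ne_one h

lemma coeff_single_ne_zero_of_mem_vars {p : MvPolynomial (Fin 2) ℂ} (h : p.totalDegree ≤ 1)
    {i : Fin 2} (hi : i ∈ p.vars) : coeff (Finsupp.single i 1) p ≠ 0 := by
  obtain ⟨α, hα, hαi⟩ := (mem_vars_iff_mem_support i).mp hi
  obtain rfl | rfl | rfl := eq_zero_or_eq_single_of_degree_le_one ((le_totalDegree hα).trans h)
  · simp at hαi
  all_goals
    fin_cases i <;> simp_all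

lemma IsPolyAut.mem_vars {L : PolyMap} (hL : IsPolyAut L) (i : Fin 2) :
    i ∈ L.1.vars ∨ i ∈ L.2.vars := by
  classical
  obtain ⟨G, -, hG⟩ := hL
  have hX : aeval ![L.1, L.2] (![G.1, G.2] i) = X i := by
    fin_cases i
    · exact congrArg Prod.fst hG
    · exact congrArg Prod.snd hG
  have hvars := vars_bind₁ ![L.1, L.2] (![G.1, G.2] i)
  rw [← aeval_eq_bind₁, hX, vars_X] at hvars
  obtain ⟨j, -, hj⟩ := Finset.mem_biUnion.mp (hvars (Finset.mem_singleton_self i))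
  fin_cases j
  · exact Or.inl hj
  · exact Or.inr hj

lemma wdeg_C_mul_le (a : ℂ) (p : MvPolynomial (Fin 2) ℂ) :
    wdeg w1 w2 (C a * p) ≤ wdeg w1 w2 p := by
  rcases eq_or_ne a 0 with rfl | ha
  · simp [wdeg]
  · rw [wdeg_C_mul ha]

lemma wdeg_affine_eq_of_lt {P Q : MvPolynomial (Fin 2) ℂ} (hPQ : wdeg w1 w2 P < wdeg w1 w2 Q)
    (a : ℂ) {b : ℂ} (hb : b ≠ 0) (c : ℂ) :
    wdeg w1 w2 (C a * P + C b * Q + C c) = wdeg w1 w2 Q := by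
  have hlow : wdeg w1 w2 (C a * P + C c) < wdeg w1 w2 (C b * Q) := by
    rw [wdeg_C_mul hb]
    refine (wdeg_add_le _ _).trans_lt (max_lt ((wdeg_C_mul_le a P).trans_lt hPQ) ?_)
    rw [wdeg_C]
    exact Nat.zero_lt_of_lt hPQ
  rw [add_right_comm, wdeg_add_eq_right_of_lt hlow, wdeg_C_mul hb]

lemma le_wdeg_affine {P Q : MvPolynomial (Fin 2) ℂ} (hPQ : wdeg w1 w2 P < wdeg w1 w2 Q)
    {a b : ℂ} (hab : a ≠ 0 ∨ b ≠ 0) (c : ℂ) :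
    wdeg w1 w2 P ≤ wdeg w1 w2 (C a * P + C b * Q + C c) := by
  rcases eq_or_ne b 0 with rfl | hb
  · have ha : a ≠ 0 := hab.resolve_right (not_not.mpr rfl)
    rcases Nat.eq_zero_or_pos (wdeg w1 w2 P) with h0 | h0
    · rw [h0]; exact Nat.zero_le _
    rw [C_0, zero_mul, add_zero, wdeg_add_eq_left_of_lt (by rwa [wdeg_C, wdeg_C_mul ha]),
      wdeg_C_mul ha]
  · rw [wdeg_affine_eq_of_lt hPQ a hb c]
    exact hPQ.le

lemma wdeg_add_wdeg_le_affine {P Q : MvPolynomial (Fin 2) ℂ}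
    (hPQ : wdeg w1 w2 P < wdeg w1 w2 Q) {a₁ b₁ a₂ b₂ : ℂ} (hb : b₁ ≠ 0 ∨ b₂ ≠ 0)
    (h₁ : a₁ ≠ 0 ∨ b₁ ≠ 0) (h₂ : a₂ ≠ 0 ∨ b₂ ≠ 0) (c₁ c₂ : ℂ) :
    wdeg w1 w2 P + wdeg w1 w2 Q ≤
      wdeg w1 w2 (C a₁ * P + C b₁ * Q + C c₁) +
        wdeg w1 w2 (C a₂ * P + C b₂ * Q + C c₂) := by
  rcases hb with hb | hb
  · rw [wdeg_affine_eq_of_lt hPQ a₁ hb c₁, add_comm]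
    exact Nat.add_le_add_left (le_wdeg_affine hPQ h₂ c₂) _
  · rw [wdeg_affine_eq_of_lt hPQ a₂ hb c₂]
    exact Nat.add_le_add_right (le_wdeg_affine hPQ h₁ c₁) _

lemma IsAffineAut.wdeg_add_le_wdeg_pcomp {L G p : PolyMap} (hL : IsAffineAut L)
    (hG : G = p ∨ G = p.swap) (hp : wdeg w1 w2 p.1 < wdeg w1 w2 p.2) :
    wdeg w1 w2 p.1 + wdeg w1 w2 p.2 ≤ wdeg w1 w2 (pcomp L G).1 + wdeg w1 w2 (pcomp L G).2 := by
  obtain ⟨hLaut, hL₁, hL₂⟩ := hL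
  have hcomp : ∀ q : MvPolynomial (Fin 2) ℂ, q.totalDegree ≤ 1 →
      aeval ![G.1, G.2] q = C (coeff (Finsupp.single 0 1) q) * G.1 +
        C (coeff (Finsupp.single 1 1) q) * G.2 + C (coeff 0 q) := by
    intro q hq
    conv_lhs => rw [eq_of_totalDegree_le_one hq]
    simp [algebraMap_eq]
  have hcol (i : Fin 2) :
      coeff (Finsupp.single i 1) L.1 ≠ 0 ∨ coeff (Finsupp.single i 1) L.2 ≠ 0 :=
    (hLaut.mem_vars i).imp (coeff_single_ne_zero_of_mem_vars hL₁.le)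
      (coeff_single_ne_zero_of_mem_vars hL₂.le)
  have hrow₁ := coeff_single_ne_zero_of_totalDegree_eq_one hL₁
  have hrow₂ := coeff_single_ne_zero_of_totalDegree_eq_one hL₂
  change _ ≤ wdeg w1 w2 (aeval ![G.1, G.2] L.1) + wdeg w1 w2 (aeval ![G.1, G.2] L.2)
  rw [hcomp _ hL₁.le, hcomp _ hL₂.le]
  rcases hG with rfl | rfl
  · exact wdeg_add_wdeg_le_affine hp (hcol 1) hrow₁ hrow₂ _ _
  · simp only [Prod.fst_swap, Prod.snd_swap]
    rw [add_comm (C _ * p.2), add_comm (C _ * p.2)]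
    exact wdeg_add_wdeg_le_affine hp (hcol 0) hrow₁.symm hrow₂.symm _ _

end Affine

section Chain

variable {w1 w2 : ℕ}

lemma pcomp_lowerT_s12 (g : Polynomial ℂ) (G : PolyMap) :
    pcomp (lowerT g) G = (G.1, G.2 + Polynomial.aeval G.1 g) := by
  simp [pcomp, lowerT, ← Polynomial.aeval_algHom_apply]

lemma pcomp_upperT (g : Polynomial ℂ) (G : PolyMap) :
    pcomp (upperT g) G = (G.1 + Polynomial.aeval G.2 g, G.2) := by
  simp [pcomp, upperT, ← Polynomial.aeval_algHom_apply]

noncomputable def chainStep (g : Polynomial ℂ) (p : PolyMap) : PolyMap :=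
  (p.2, p.1 + Polynomial.aeval p.2 g)

/-- Puts the component of `chain L1 f n` modified last in second position. -/
def orient (n : ℕ) (p : PolyMap) : PolyMap :=
  if n % 2 = 1 then p else p.swap

lemma orient_chain_succ (L1 : PolyMap) (f : ℕ → Polynomial ℂ) (n : ℕ) :
    orient (n + 1) (chain L1 f (n + 1)) = chainStep (f (n + 1)) (orient n (chain L1 f n)) := by
  rcases Nat.mod_two_eq_zero_or_one n with h | h
  · simp [chain, orient, h, Nat.succ_mod_two_eq_one_iff, pcomp_lowerT_s12, chainStep]
  · simp [chain, orient, h, Nat.succ_mod_two_eq_zero_iff, pcomp_upperT, chainStep]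

lemma eq_or_eq_swap_orient (n : ℕ) (p : PolyMap) : p = orient n p ∨ p = (orient n p).swap := by
  unfold orient
  split_ifs
  · exact Or.inl rfl
  · exact Or.inr p.swap_swap.symm

def Separated (w1 w2 : ℕ) (p : PolyMap) : Prop :=
  1 ≤ wdeg w1 w2 p.1 ∧ 2 * wdeg w1 w2 p.1 ≤ wdeg w1 w2 p.2 ∧ max w1 w2 ≤ wdeg w1 w2 p.2

lemma wdeg_chainStep_snd {p : PolyMap} (hp : wdeg w1 w2 p.1 < wdeg w1 w2 p.2)
    {g : Polynomial ℂ} (hg : 0 < g.natDegree) :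
    wdeg w1 w2 (chainStep g p).2 = g.natDegree * wdeg w1 w2 p.2 := by
  have hlt : wdeg w1 w2 p.1 < wdeg w1 w2 (Polynomial.aeval p.2 g) := by
    rw [wdeg_aeval]
    nlinarith
  rw [chainStep, wdeg_add_eq_right_of_lt hlt, wdeg_aeval]

lemma Separated.chainStep (hw1 : 0 < w1) {p : PolyMap} (hp : Separated w1 w2 p)
    {g : Polynomial ℂ} (hg : 1 < g.natDegree) : Separated w1 w2 (chainStep g p) := by
  obtain ⟨h1, h2, h3⟩ := hp
  have hstep := wdeg_chainStep_snd (w1 := w1) (w2 := w2) (p := p) (by omega) (g := g) (by omega)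
  refine ⟨le_trans (by omega) h3, ?_, ?_⟩ <;> rw [hstep]
  · exact Nat.mul_le_mul_right _ hg
  · nlinarith

lemma separated_chainStep_swap (hw1 : 0 < w1) (hw2 : 0 < w2) {L : PolyMap}
    (hL : IsAffineAut L) {g : Polynomial ℂ} (hg : 1 < g.natDegree) :
    Separated w1 w2 (chainStep g L.swap) := by
  obtain ⟨hLaut, hL₁, hL₂⟩ := hL
  have hgrow := max_le_wdeg_add_aeval (w1 := w1) (w2 := w2) hL₁.le hL₂.le hg
  have hpos : 1 ≤ wdeg w1 w2 L.1 := hL₁ ▸ totalDegree_le_wdeg hw1 hw2 L.1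
  have hL₁_le : wdeg w1 w2 L.1 ≤ g.natDegree * wdeg w1 w2 L.1 :=
    Nat.le_mul_of_pos_left _ (by omega)
  have hw (i : Fin 2) :
      ![w1, w2] i ≤ max (wdeg w1 w2 L.2) (g.natDegree * wdeg w1 w2 L.1) := by
    rcases hLaut.mem_vars i with h | h
    · exact (le_wdeg_of_mem_vars h).trans (hL₁_le.trans (le_max_right _ _))
    · exact (le_wdeg_of_mem_vars h).trans (le_max_left _ _)
  exact ⟨hpos, (Nat.mul_le_mul_right _ hg).trans ((le_max_right _ _).trans hgrow),
    max_le ((hw 0).trans hgrow) ((hw 1).trans hgrow)⟩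

lemma separated_orient_chain (hw1 : 0 < w1) (hw2 : 0 < w2) {L1 : PolyMap} (hL1 : IsAffineAut L1)
    {f : ℕ → Polynomial ℂ} {n : ℕ} (hf : ∀ i, 1 ≤ i → i ≤ n → 1 < (f i).natDegree)
    (hn : 1 ≤ n) :
    Separated w1 w2 (orient n (chain L1 f n)) := by
  induction n, hn using Nat.le_induction with
  | base =>
    rw [orient_chain_succ]
    exact separated_chainStep_swap hw1 hw2 hL1 (hf 1 le_rfl le_rfl)
  | succ n hn ih =>
    rw [orient_chain_succ]
    exact (ih fun i hi hin => hf i hi (by omega)).chainStep hw1 (hf (n + 1) (by omega) le_rfl)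

end Chain

theorem stmt_12_general (w1 w2 : ℕ) (hw1 : 0 < w1) (hw2 : 0 < w2) (F : PolyMap)
    (l : ℕ) (hl : 2 ≤ l) (L1 L2 : PolyMap) (hL1 : IsAffineAut L1) (hL2 : IsAffineAut L2)
    (f : ℕ → Polynomial ℂ) (hf : ∀ i, 1 ≤ i → i ≤ l → 1 < (f i).natDegree)
    (hF : F = pcomp L2 (chain L1 f l)) :
    w1 + w2 < wdeg w1 w2 F.1 + wdeg w1 w2 F.2 := by
  obtain ⟨m, rfl⟩ : ∃ m, l = m + 1 + 1 := ⟨l - 2, by omega⟩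
  have hprev : Separated w1 w2 (orient (m + 1) (chain L1 f (m + 1))) :=
    separated_orient_chain hw1 hw2 hL1 (fun i hi him => hf i hi (by omega)) (by omega)
  have hlast := orient_chain_succ L1 f (m + 1)
  set p := orient (m + 1 + 1) (chain L1 f (m + 1 + 1))
  obtain ⟨hp₁, hp₂, -⟩ : Separated w1 w2 p :=
    hlast ▸ hprev.chainStep hw1 (hf _ (by omega) le_rfl)
  have hmax : max w1 w2 ≤ wdeg w1 w2 p.1 := hlast ▸ hprev.2.2
  calc w1 + w2 < wdeg w1 w2 p.1 + wdeg w1 w2 p.2 := by omega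
    _ ≤ wdeg w1 w2 F.1 + wdeg w1 w2 F.2 :=
      hF ▸ hL2.wdeg_add_le_wdeg_pcomp (eq_or_eq_swap_orient _ _) (by omega)

/-- If `F` is an automorphism of ℂ² of length at least 2, then
`wdeg F1 + wdeg F2 > w1 + w2`. -/
theorem stmt_12 (w1 w2 : ℕ) (hw1 : 0 < w1) (hw2 : 0 < w2) (F : PolyMap) (hAut : IsPolyAut F)
    (l : ℕ) (hl : 2 ≤ l) (L1 L2 : PolyMap) (hL1 : IsAffineAut L1) (hL2 : IsAffineAut L2)
    (f : ℕ → Polynomial ℂ) (hf : ∀ i, 1 ≤ i → i ≤ l → 1 < (f i).natDegree)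
    (hF : F = pcomp L2 (chain L1 f l)) :
    w1 + w2 < wdeg w1 w2 F.1 + wdeg w1 w2 F.2 :=
  stmt_12_general w1 w2 hw1 hw2 F l hl L1 L2 hL1 hL2 f hf hF
end
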